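/- Let w, h : B_R → ℝ^d be integrable on concentric balls B_r ⊆ B_R ⊂ ℝ^d, and suppose there exist C₀ > 0 and α ∈ (0,1) such that for all 0 < r ≤ R: ∫_{B_r}|Dh − (Dh)_r| dx ≤ C₀ (r/R)^{d+α} ∫_{B_R}|Dh − (Dh)_R| dx (the interior decay estimate for h). Then there exists C > 0 depending only on C₀ such that for all 0 < r ≤ R: ∫_{B_r}|Dw − (Dw)_r| dx ≤ C (r/R)^{d+α} ∫_{B_R}|Dw − (Dw)_R| dx + C ∫_{B_R}|Dw − Dh| dx. -/

import Mathlib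

/-!
Averages are 1-Lipschitz in `L¹` up to the volume factor: `|B_r| ‖(f)_r - (g)_r‖ ≤ ∫_{B_r} |f - g|`,
so the mean oscillation of `f` on a ball exceeds that of `g` by at most `2 ∫_{B_r} |f - g|`.
Comparing `Dw` with `Dh` at scale `r`, applying the decay of `h`, and comparing back at scale `R`
gives the estimate with `C = 2 C₀ + 2`.
-/

open MeasureTheory Metric

section Oscillation

variable {α E : Type*} [MeasurableSpace α] {μ : Measure α}
  [NormedAddCommGroup E] [NormedSpace ℝ E] {s : Set α} {f g : α → E}

theorem measureReal_mul_norm_setAverage_sub_le (hs : μ s ≠ ⊤) (hf : IntegrableOn f s μ)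
    (hg : IntegrableOn g s μ) :
    μ.real s * ‖(⨍ x in s, f x ∂μ) - ⨍ x in s, g x ∂μ‖ ≤ ∫ x in s, ‖f x - g x‖ ∂μ := by
  rw [← Real.norm_of_nonneg measureReal_nonneg, ← norm_smul, smul_sub,
    measure_smul_setAverage f hs, measure_smul_setAverage g hs, ← integral_sub hf hg]
  exact norm_integral_le_integral_norm _

theorem setIntegral_norm_sub_setAverage_le (hs : μ s ≠ ⊤) (hf : IntegrableOn f s μ)
    (hg : IntegrableOn g s μ) :
    ∫ x in s, ‖f x - ⨍ y in s, f y ∂μ‖ ∂μ ≤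
      (∫ x in s, ‖g x - ⨍ y in s, g y ∂μ‖ ∂μ) + 2 * ∫ x in s, ‖f x - g x‖ ∂μ := by
  set A := ⨍ y in s, f y ∂μ
  set B := ⨍ y in s, g y ∂μ
  have hgB : IntegrableOn (fun x => ‖g x - B‖) s μ := (hg.sub (integrableOn_const hs)).norm
  have hfg : IntegrableOn (fun x => ‖f x - g x‖) s μ := (hf.sub hg).norm
  have hsum : IntegrableOn (fun x => ‖g x - B‖ + ‖f x - g x‖) s μ := hgB.add hfg
  have hpointwise (x : α) : ‖f x - A‖ ≤ ‖g x - B‖ + ‖f x - g x‖ + ‖A - B‖ := by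
    calc ‖f x - A‖ = ‖(g x - B) + (f x - g x) - (A - B)‖ := by congr 1; abel
      _ ≤ ‖g x - B‖ + ‖f x - g x‖ + ‖A - B‖ :=
        (norm_sub_le _ _).trans (add_le_add_left (norm_add_le _ _) _)
  calc ∫ x in s, ‖f x - A‖ ∂μ
      ≤ ∫ x in s, (‖g x - B‖ + ‖f x - g x‖ + ‖A - B‖) ∂μ :=
        integral_mono (hf.sub (integrableOn_const hs)).norm
          (hsum.add (integrableOn_const hs)) hpointwise
    _ = (∫ x in s, ‖g x - B‖ ∂μ) + (∫ x in s, ‖f x - g x‖ ∂μ) + μ.real s * ‖A - B‖ := by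
        rw [integral_add hsum (integrableOn_const hs), integral_add hgB hfg,
          setIntegral_const, smul_eq_mul]
    _ ≤ _ := by linarith [measureReal_mul_norm_setAverage_sub_le hs hf hg]

end Oscillation

theorem le_of_comparison_of_decay {Fr Hr Er FR HR E C₀ t : ℝ} (hC₀ : 0 ≤ C₀) (ht₀ : 0 ≤ t)
    (ht₁ : t ≤ 1) (hFR : 0 ≤ FR) (hE : 0 ≤ E) (hEr : Er ≤ E) (hr : Fr ≤ Hr + 2 * Er)
    (hdecay : Hr ≤ C₀ * t * HR) (hR : HR ≤ FR + 2 * E) :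
    Fr ≤ (2 * C₀ + 2) * t * FR + (2 * C₀ + 2) * E := by
  have hHR : C₀ * t * HR ≤ C₀ * t * FR + C₀ * t * (2 * E) := by
    rw [← mul_add]; exact mul_le_mul_of_nonneg_left hR (by positivity)
  have htE : C₀ * t * E ≤ C₀ * E :=
    mul_le_mul_of_nonneg_right (mul_le_of_le_one_right hC₀ ht₁) hE
  have htFR : C₀ * t * FR ≤ (2 * C₀ + 2) * t * FR := by gcongr; linarith
  linarith

theorem oscillation_perturbation (C₀ : ℝ) (hC₀ : 0 < C₀) :
    ∃ C > 0, ∀ (d : ℕ) (x₀ : EuclideanSpace ℝ (Fin d)) (R : ℝ), 0 < R →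
      ∀ (Dw Dh : EuclideanSpace ℝ (Fin d) → EuclideanSpace ℝ (Fin d)),
      IntegrableOn Dw (ball x₀ R) →
      IntegrableOn Dh (ball x₀ R) →
      ∀ (α : ℝ), α ∈ Set.Ioo (0:ℝ) 1 →
      (∀ r : ℝ, 0 < r → r ≤ R →
        (∫ x in ball x₀ r, ‖Dh x - ⨍ y in ball x₀ r, Dh y‖) ≤
          C₀ * (r / R) ^ ((d : ℝ) + α) *
            ∫ x in ball x₀ R, ‖Dh x - ⨍ y in ball x₀ R, Dh y‖) →
      ∀ r : ℝ, 0 < r → r ≤ R →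
        (∫ x in ball x₀ r, ‖Dw x - ⨍ y in ball x₀ r, Dw y‖) ≤
          C * (r / R) ^ ((d : ℝ) + α) *
            (∫ x in ball x₀ R, ‖Dw x - ⨍ y in ball x₀ R, Dw y‖) +
            C * ∫ x in ball x₀ R, ‖Dw x - Dh x‖ := by
  refine ⟨2 * C₀ + 2, by linarith, ?_⟩
  intro d x₀ R hR Dw Dh hw hh α hα hdecay r hr hrR
  have hsub : ball x₀ r ⊆ ball x₀ R := ball_subset_ball hrR
  have hError : ∫ x in ball x₀ r, ‖Dw x - Dh x‖ ≤ ∫ x in ball x₀ R, ‖Dw x - Dh x‖ :=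
    setIntegral_mono_set (hw.sub hh).norm (.of_forall fun _ => norm_nonneg _) hsub.eventuallyLE
  have hcompare_r := setIntegral_norm_sub_setAverage_le measure_ball_lt_top.ne
    (hw.mono_set hsub) (hh.mono_set hsub)
  have hcompare_R := setIntegral_norm_sub_setAverage_le measure_ball_lt_top.ne hh hw
  simp only [norm_sub_rev (Dh _) (Dw _)] at hcompare_R
  have hratio : 0 ≤ r / R := div_nonneg hr.le hR.le
  exact le_of_comparison_of_decay hC₀.le (Real.rpow_nonneg hratio _)
    (Real.rpow_le_one hratio ((div_le_one hR).2 hrR) (by positivity [hα.1.le]))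
    (integral_nonneg fun _ => norm_nonneg _) (integral_nonneg fun _ => norm_nonneg _) hError
    hcompare_r (hdecay r hr hrR) hcompare_R
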